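/- For any isometry U of ℓ²(ℕ) and any ε > 0, it is not the case that μ(R_N U) = O(N^{-1-ε}) as N → ∞. -/

import Mathlib

open scoped InnerProductSpace

/-- The `(i,j)` matrix entry `U_{ij} = ⟨U e_j, e_i⟩` of an operator on `ℓ²(ℕ)`. -/
noncomputable def entry (U : lp (fun _ : ℕ => ℂ) 2 →ₗᵢ[ℂ] lp (fun _ : ℕ => ℂ) 2)
    (i j : ℕ) : ℂ :=
  ⟪U (lp.single 2 j 1), lp.single 2 i 1⟫_ℂ

/-- The block coherence `μ(R_N U) = sup_{i ≥ N, j ∈ ℕ} |U_{ij}|²`. -/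
noncomputable def muR (U : lp (fun _ : ℕ => ℂ) 2 →ₗᵢ[ℂ] lp (fun _ : ℕ => ℂ) 2)
    (N : ℕ) : ℝ :=
  ⨆ i : {i : ℕ // N ≤ i}, ⨆ j : ℕ, ‖entry U i j‖ ^ 2

/-!
The squared moduli `|U_{ij}|²` form a matrix whose columns sum to `1` (the columns `U e_j` are
unit vectors) and whose rows have sums at most `1` (Bessel's inequality for the orthonormal family
`U e_j`). Row `i` is bounded entrywise by `μ(R_i U)`. If `∑ μ(R_N U)` converged, then beyond some
row `N` every column would carry mass less than `1/2`, so every column would carry mass at least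
`1/2` in the first `N` rows; summing over `2N + 1` columns then exceeds the total mass `N` of
those rows. Finally `μ(R_N U) ≤ C N^{-1-ε}` would make `∑ μ(R_N U)` converge.
-/

open Filter Finset

theorem not_summable_of_hasSum_columns_of_sum_rows_le {a : ℕ → ℕ → ℝ} {b : ℕ → ℝ}
    (hcol : ∀ j, HasSum (fun i => a i j) 1) (hrow : ∀ i (s : Finset ℕ), ∑ j ∈ s, a i j ≤ 1)
    (hle : ∀ i j, a i j ≤ b i) : ¬ Summable b := by
  intro hb
  obtain ⟨N, hN⟩ : ∃ N, ∑' k, b (k + N) < 1 / 2 :=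
    ((tendsto_sum_nat_add b).eventually (gt_mem_nhds (by norm_num))).exists
  have hhead : ∀ j, 1 / 2 ≤ ∑ i ∈ range N, a i j := by
    intro j
    have hsplit := (hcol j).summable.sum_add_tsum_nat_add N
    have htail : ∑' k, a (k + N) j ≤ ∑' k, b (k + N) :=
      Summable.tsum_le_tsum (fun k => hle _ j)
        ((summable_nat_add_iff N).2 (hcol j).summable) ((summable_nat_add_iff N).2 hb)
    rw [(hcol j).tsum_eq] at hsplit
    linarith
  have hcount : ((2 * N + 1 : ℕ) : ℝ) * (1 / 2) ≤ N :=
    calc ((2 * N + 1 : ℕ) : ℝ) * (1 / 2) = ∑ _j ∈ range (2 * N + 1), (1 / 2 : ℝ) := by simp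
      _ ≤ ∑ j ∈ range (2 * N + 1), ∑ i ∈ range N, a i j := sum_le_sum fun j _ => hhead j
      _ = ∑ i ∈ range N, ∑ j ∈ range (2 * N + 1), a i j := sum_comm
      _ ≤ ∑ _i ∈ range N, (1 : ℝ) := sum_le_sum fun i _ => hrow i _
      _ = N := by simp
  push_cast at hcount
  linarith

theorem lp.orthonormal_single {ι 𝕜 : Type*} [RCLike 𝕜] [DecidableEq ι] :
    Orthonormal 𝕜 fun i : ι => lp.single 2 i (1 : 𝕜) := by
  rw [orthonormal_iff_ite]
  intro i j
  rw [lp.inner_single_left, lp.single_apply]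
  by_cases h : i = j <;> simp [h]

section Isometry

variable (U : lp (fun _ : ℕ => ℂ) 2 →ₗᵢ[ℂ] lp (fun _ : ℕ => ℂ) 2)

theorem norm_entry (i j : ℕ) : ‖entry U i j‖ = ‖U (lp.single 2 j 1) i‖ := by
  rw [entry, lp.inner_single_right]
  simp

theorem hasSum_sq_norm_entry (j : ℕ) : HasSum (fun i => ‖entry U i j‖ ^ 2) 1 := by
  have h := lp.hasSum_norm (by norm_num : 0 < (2 : ENNReal).toReal) (U (lp.single 2 j 1))
  rw [U.norm_map, (lp.orthonormal_single (𝕜 := ℂ)).1 j, Real.one_rpow] at h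
  simpa [norm_entry] using h

theorem sum_sq_norm_entry_le_one (i : ℕ) (s : Finset ℕ) : ∑ j ∈ s, ‖entry U i j‖ ^ 2 ≤ 1 := by
  have hbessel := ((lp.orthonormal_single (𝕜 := ℂ)).comp_linearIsometry U).sum_inner_products_le
    (s := s) (lp.single 2 i (1 : ℂ))
  rwa [(lp.orthonormal_single (𝕜 := ℂ)).1 i, one_pow] at hbessel

theorem sq_norm_entry_le_one (i j : ℕ) : ‖entry U i j‖ ^ 2 ≤ 1 :=
  le_hasSum (hasSum_sq_norm_entry U j) i fun _ _ => by positivity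

theorem sq_norm_entry_le_muR {N i : ℕ} (hi : N ≤ i) (j : ℕ) : ‖entry U i j‖ ^ 2 ≤ muR U N := by
  have hrow : BddAbove (Set.range fun j => ‖entry U i j‖ ^ 2) :=
    ⟨1, Set.forall_mem_range.2 (sq_norm_entry_le_one U i)⟩
  have hrows : BddAbove (Set.range fun i : {i : ℕ // N ≤ i} => ⨆ j, ‖entry U i j‖ ^ 2) :=
    ⟨1, Set.forall_mem_range.2 fun i => ciSup_le (sq_norm_entry_le_one U i)⟩
  exact (le_ciSup hrow j).trans (le_ciSup hrows ⟨i, hi⟩)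

theorem muR_nonneg (N : ℕ) : 0 ≤ muR U N :=
  Real.iSup_nonneg fun _ => Real.iSup_nonneg fun _ => by positivity

theorem not_summable_muR : ¬ Summable (muR U) :=
  not_summable_of_hasSum_columns_of_sum_rows_le (hasSum_sq_norm_entry U)
    (sum_sq_norm_entry_le_one U) fun i => sq_norm_entry_le_muR U (le_refl i)

end Isometry

/-- For an isometry `U` of `ℓ²(ℕ)` and any `ε > 0`, it is not the case that
`μ(R_N U) = O(N^{-1-ε})`, i.e. there is no `C > 0` with
`μ(R_N U) ≤ C N^{-1-ε}` for all `N ≥ 1`. -/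
theorem statement2 (U : lp (fun _ : ℕ => ℂ) 2 →ₗᵢ[ℂ] lp (fun _ : ℕ => ℂ) 2)
    (ε : ℝ) (hε : 0 < ε) :
    ¬ ∃ C : ℝ, 0 < C ∧ ∀ N : ℕ, 1 ≤ N → muR U N ≤ C * (N : ℝ) ^ (-(1 : ℝ) - ε) := by
  rintro ⟨C, -, hbound⟩
  have hdom : Summable fun N : ℕ => C * (N : ℝ) ^ (-(1 : ℝ) - ε) :=
    (Real.summable_nat_rpow.mpr (by linarith)).mul_left C
  refine not_summable_muR U ((summable_nat_add_iff 1).mp ?_)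
  exact ((summable_nat_add_iff 1).mpr hdom).of_nonneg_of_le (fun N => muR_nonneg U _)
    fun N => hbound (N + 1) (by omega)
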